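/- With m(t) = ∫₀^∞ φ_{1/n+σ²/u}(t) k_λ(u) du (a scale mixture of centered normals), the function s ↦ log m(√s) is convex on (0,∞); equivalently, m(t) is log-convex as a function of t². -/

import Mathlib

/-!
For `s ≥ 0` the integrand is `c(u) · exp(-s / (2 V(u)))` with `V(u) = 1/n + σ²/u` and
`c(u) = k_λ(u) / √(2π V(u)) > 0`, so `s ↦ m(√s)` is the Laplace transform of a positive measure.
Hölder's inequality with exponents `a + b = 1`, `∫ f^a g^b ≤ (∫ f)^a (∫ g)^b`, applied to
`f = c · exp(-x / (2V))` and `g = c · exp(-y / (2V))`, is exactly the log-convexity of a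
Laplace transform.
-/

open MeasureTheory Real Set

/-- Normal density with mean 0 and variance `v`. -/
noncomputable def normalPdf (v t : ℝ) : ℝ :=
  (Real.sqrt (2 * Real.pi * v))⁻¹ * Real.exp (-t ^ 2 / (2 * v))

/-- Gamma(shape l/2, rate l/2) density (on `(0,∞)`). -/
noncomputable def gammaPdf (l u : ℝ) : ℝ :=
  ((l / 2) ^ (l / 2) / Real.Gamma (l / 2)) * u ^ (l / 2 - 1) * Real.exp (-(l * u / 2))

namespace MeasureTheory

variable {α : Type*} [MeasurableSpace α] {μ : Measure α}

theorem integral_pos_of_ae_pos [NeZero μ] {f : α → ℝ} (hf : Integrable f μ)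
    (hpos : ∀ᵐ u ∂μ, 0 < f u) : 0 < ∫ u, f u ∂μ := by
  rw [integral_pos_iff_support_of_nonneg_ae (hpos.mono fun _ ↦ le_of_lt) hf, pos_iff_ne_zero]
  intro hzero
  have : ∀ᵐ u ∂μ, False := by
    filter_upwards [hpos, measure_eq_zero_iff_ae_notMem.mp hzero] with u hu hu'
    exact hu' hu.ne'
  exact NeZero.ne μ (ae_eq_bot.mp (Filter.eventually_false_iff_eq_bot.mp this))

theorem integral_rpow_mul_rpow_le {f g : α → ℝ} (hf : Integrable f μ) (hg : Integrable g μ)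
    (hf0 : 0 ≤ᵐ[μ] f) (hg0 : 0 ≤ᵐ[μ] g) {p q : ℝ} (hp : 0 ≤ p) (hq : 0 ≤ q) (hpq : p + q = 1) :
    ∫ u, f u ^ p * g u ^ q ∂μ ≤ (∫ u, f u ∂μ) ^ p * (∫ u, g u ∂μ) ^ q := by
  have hfg0 : 0 ≤ᵐ[μ] fun u ↦ f u ^ p * g u ^ q := by
    filter_upwards [hf0, hg0] with u hfu hgu using mul_nonneg (rpow_nonneg hfu p) (rpow_nonneg hgu q)
  have hfg_meas : AEStronglyMeasurable (fun u ↦ f u ^ p * g u ^ q) μ :=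
    ((hf.1.aemeasurable.pow_const p).mul (hg.1.aemeasurable.pow_const q)).aestronglyMeasurable
  have hofReal : (fun u ↦ ENNReal.ofReal (f u ^ p * g u ^ q)) =ᵐ[μ]
      fun u ↦ ENNReal.ofReal (f u) ^ p * ENNReal.ofReal (g u) ^ q := by
    filter_upwards [hf0, hg0] with u hfu hgu
    rw [ENNReal.ofReal_mul (rpow_nonneg hfu p), ENNReal.ofReal_rpow_of_nonneg hfu hp,
      ENNReal.ofReal_rpow_of_nonneg hgu hq]
  rw [integral_eq_lintegral_of_nonneg_ae hfg0 hfg_meas, lintegral_congr_ae hofReal,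
    integral_eq_lintegral_of_nonneg_ae hf0 hf.1, integral_eq_lintegral_of_nonneg_ae hg0 hg.1,
    ENNReal.toReal_rpow, ENNReal.toReal_rpow, ← ENNReal.toReal_mul]
  refine ENNReal.toReal_mono ?_ (ENNReal.lintegral_mul_norm_pow_le
    hf.1.aemeasurable.ennreal_ofReal hg.1.aemeasurable.ennreal_ofReal hp hq hpq)
  exact ENNReal.mul_ne_top (ENNReal.rpow_ne_top_of_nonneg hp hf.lintegral_lt_top.ne)
    (ENNReal.rpow_ne_top_of_nonneg hq hg.lintegral_lt_top.ne)

theorem convexOn_log_integral_mul_exp [NeZero μ] {c θ : α → ℝ} {s : Set ℝ}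
    (hs : Convex ℝ s) (hc : ∀ᵐ u ∂μ, 0 < c u)
    (hint : ∀ x ∈ s, Integrable (fun u ↦ c u * exp (x * θ u)) μ) :
    ConvexOn ℝ s fun x ↦ log (∫ u, c u * exp (x * θ u) ∂μ) := by
  have hpos : ∀ x ∈ s, 0 < ∫ u, c u * exp (x * θ u) ∂μ := fun x hx ↦
    integral_pos_of_ae_pos (hint x hx) (hc.mono fun u hu ↦ by positivity)
  refine ⟨hs, fun x hx y hy a b ha hb hab ↦ ?_⟩
  have hsplit : (fun u ↦ c u * exp ((a • x + b • y) * θ u)) =ᵐ[μ]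
      fun u ↦ (c u * exp (x * θ u)) ^ a * (c u * exp (y * θ u)) ^ b := by
    filter_upwards [hc] with u hu
    rw [mul_rpow hu.le (exp_pos _).le, mul_rpow hu.le (exp_pos _).le, ← exp_mul, ← exp_mul,
      mul_mul_mul_comm, ← rpow_add hu, hab, rpow_one, ← exp_add, smul_eq_mul, smul_eq_mul]
    ring_nf
  have hholder := integral_rpow_mul_rpow_le (hint x hx) (hint y hy)
    (hc.mono fun u hu ↦ by positivity) (hc.mono fun u hu ↦ by positivity) ha hb hab
  rw [← integral_congr_ae hsplit] at hholder
  calc log (∫ u, c u * exp ((a • x + b • y) * θ u) ∂μ)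
      ≤ log ((∫ u, c u * exp (x * θ u) ∂μ) ^ a * (∫ u, c u * exp (y * θ u) ∂μ) ^ b) :=
        log_le_log (hpos _ (hs hx hy ha hb hab)) hholder
    _ = a • log (∫ u, c u * exp (x * θ u) ∂μ) + b • log (∫ u, c u * exp (y * θ u) ∂μ) := by
        rw [log_mul (rpow_pos_of_pos (hpos x hx) a).ne' (rpow_pos_of_pos (hpos y hy) b).ne',
          log_rpow (hpos x hx), log_rpow (hpos y hy), smul_eq_mul, smul_eq_mul]

end MeasureTheory

namespace ProbabilityTheory

theorem integrable_gammaPDFReal {a r : ℝ} (ha : 0 < a) (hr : 0 < r) :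
    Integrable (gammaPDFReal a r) := by
  refine ⟨(measurable_gammaPDFReal a r).aestronglyMeasurable, ?_⟩
  rw [hasFiniteIntegral_iff_ofReal (ae_of_all _ (gammaPDFReal_nonneg ha hr))]
  exact (lintegral_gammaPDF_eq_one ha hr).trans_lt ENNReal.one_lt_top

end ProbabilityTheory

open ProbabilityTheory

theorem gammaPdf_eq_gammaPDFReal {l u : ℝ} (hu : 0 ≤ u) :
    gammaPdf l u = gammaPDFReal (l / 2) (l / 2) u := by
  rw [gammaPdf, gammaPDFReal, if_pos hu]
  ring_nf

theorem integrableOn_gammaPdf {l : ℝ} (hl : 0 < l) : IntegrableOn (gammaPdf l) (Ioi 0) :=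
  (integrable_gammaPDFReal (half_pos hl) (half_pos hl)).integrableOn.congr_fun
    (fun _ hu ↦ (gammaPdf_eq_gammaPDFReal (le_of_lt hu)).symm) measurableSet_Ioi

theorem gammaPdf_pos {l u : ℝ} (hl : 0 < l) (hu : 0 < u) : 0 < gammaPdf l u :=
  gammaPdf_eq_gammaPDFReal hu.le ▸ gammaPDFReal_pos (half_pos hl) (half_pos hl) hu

theorem normalPdf_pos {v : ℝ} (hv : 0 < v) (t : ℝ) : 0 < normalPdf v t := by
  unfold normalPdf
  have := sqrt_pos.mpr (by positivity : 0 < 2 * π * v)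
  positivity

theorem normalPdf_sqrt {s : ℝ} (hs : 0 ≤ s) (v : ℝ) :
    normalPdf v (√s) = (√(2 * π * v))⁻¹ * exp (s * -(2 * v)⁻¹) := by
  rw [normalPdf, sq_sqrt hs, neg_div, div_eq_mul_inv, mul_neg]

theorem normalPdf_le {v₀ v : ℝ} (hv₀ : 0 < v₀) (hv : v₀ ≤ v) (t : ℝ) :
    normalPdf v t ≤ (√(2 * π * v₀))⁻¹ := by
  have hsqrt : √(2 * π * v₀) ≤ √(2 * π * v) := sqrt_le_sqrt (by gcongr)
  have hexp : exp (-t ^ 2 / (2 * v)) ≤ 1 :=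
    exp_le_one_iff.mpr (div_nonpos_of_nonpos_of_nonneg (by nlinarith [sq_nonneg t]) (by linarith))
  calc normalPdf v t ≤ (√(2 * π * v))⁻¹ * 1 := by
        rw [normalPdf]; gcongr
    _ ≤ (√(2 * π * v₀))⁻¹ := by
        rw [mul_one]; gcongr

theorem measurable_normalPdf (t : ℝ) : Measurable fun v ↦ normalPdf v t := by
  unfold normalPdf; fun_prop

section NormalScaleMixture

variable {α : Type*} [MeasurableSpace α] {μ : Measure α}

theorem convexOn_log_integral_normalPdf_sqrt_mul [NeZero μ] {V g : α → ℝ} {v₀ : ℝ}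
    (hv₀ : 0 < v₀) (hV : AEMeasurable V μ) (hVge : ∀ᵐ u ∂μ, v₀ ≤ V u) (hg : Integrable g μ)
    (hg_pos : ∀ᵐ u ∂μ, 0 < g u) :
    ConvexOn ℝ (Ici 0) fun s ↦ log (∫ u, normalPdf (V u) (√s) * g u ∂μ) := by
  have hint : ∀ t, Integrable (fun u ↦ normalPdf (V u) t * g u) μ := fun t ↦
    hg.bdd_mul ((measurable_normalPdf t).comp_aemeasurable hV).aestronglyMeasurable
      (c := (√(2 * π * v₀))⁻¹) <| by
        filter_upwards [hVge] with u hu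
        rw [norm_of_nonneg (normalPdf_pos (hv₀.trans_le hu) t).le]
        exact normalPdf_le hv₀ hu t
  have hlaplace : ∀ s ∈ Ici (0 : ℝ), ∀ u,
      normalPdf (V u) (√s) * g u = (√(2 * π * V u))⁻¹ * g u * exp (s * -(2 * V u)⁻¹) := by
    intro s hs u
    rw [normalPdf_sqrt hs]
    ring
  have hc : ∀ᵐ u ∂μ, 0 < (√(2 * π * V u))⁻¹ * g u := by
    filter_upwards [hVge, hg_pos] with u hu hgu
    have := hv₀.trans_le hu
    positivity
  refine (convexOn_log_integral_mul_exp (θ := fun u ↦ -(2 * V u)⁻¹) (convex_Ici 0) hc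
    fun s hs ↦ ?_).congr fun s hs ↦ ?_
  · exact (hint (√s)).congr (ae_of_all _ (hlaplace s hs))
  · simp only [hlaplace s hs]

end NormalScaleMixture

/-- With `m(t) = ∫₀^∞ φ_{1/n+σ²/u}(t) k_λ(u) du`, the function
`s ↦ log m(√s)` is convex on `(0,∞)`; i.e. `m(t)` is log-convex as a function of `t²`. -/
theorem stmt7 (n : ℕ) (hn : 0 < n) (σ2 l : ℝ) (hσ : 0 < σ2) (hl : 0 < l) :
    ConvexOn ℝ (Set.Ioi (0 : ℝ)) (fun s : ℝ =>
      Real.log (∫ u in Set.Ioi (0 : ℝ),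
        normalPdf (1 / n + σ2 / u) (Real.sqrt s) * gammaPdf l u)) := by
  have hn' : (0 : ℝ) < 1 / n := by positivity
  have : NeZero (volume.restrict (Ioi (0 : ℝ))) := ⟨by simp⟩
  refine (convexOn_log_integral_normalPdf_sqrt_mul hn' (by fun_prop) ?_ (integrableOn_gammaPdf hl)
    ?_).subset Ioi_subset_Ici_self (convex_Ioi 0)
  · filter_upwards [ae_restrict_mem measurableSet_Ioi] with u (hu : 0 < u)
    exact le_add_of_nonneg_right (div_pos hσ hu).le
  · filter_upwards [ae_restrict_mem measurableSet_Ioi] with u hu using gammaPdf_pos hl hu
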